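/- Let Γ = Γ(G, (G_i)_{i∈I}) be the coset incidence system of a group G over subgroups (G_i)_{i∈I}. Then for each J ⊆ I, the map φ_J : Γ(G_J, (G_{J∪{i}})_{i∈I∖J}) → Γ_{{G_j : j∈J}} given by φ_J(a G_{J∪{i}}) = a G_i (a ∈ G_J, i ∈ I ∖ J) is a well-defined injective homomorphism of incidence systems over I ∖ J (it preserves types and incidence). Furthermore, φ_J is surjective if and only if for all i ∈ I ∖ J one has ⋂_{j∈J} (G_j G_i) = G_J G_i; and if φ_J is surjective for all J ⊆ I, then φ_J is an isomorphism for all J ⊆ I. -/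

import Mathlib

open scoped Pointwise

namespace ChiralGeom

/-- An incidence system `(X, *, t, I)`: a set of elements `X`, a type function `t : X → I`,
and a reflexive symmetric incidence relation such that distinct elements of the same type
are never incident. -/
structure IncidenceSystem (X : Type*) (I : Type*) where
  t : X → I
  inc : X → X → Prop
  inc_refl : ∀ x, inc x x
  inc_symm : ∀ x y, inc x y → inc y x
  eq_of_inc_of_t_eq : ∀ x y, inc x y → t x = t y → x = y

namespace IncidenceSystem

variable {X I : Type*} (Γ : IncidenceSystem X I)

/-- A flag is a set of pairwise incident elements. -/
def IsFlag (F : Set X) : Prop := ∀ x ∈ F, ∀ y ∈ F, Γ.inc x y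

/-- A chamber is a flag of type `I` (containing elements of every type). -/
def IsChamber (C : Set X) : Prop := Γ.IsFlag C ∧ Γ.t '' C = Set.univ

/-- `Γ` is a geometry when every flag is contained in a chamber. -/
def IsGeometry : Prop := ∀ F : Set X, Γ.IsFlag F → ∃ C : Set X, Γ.IsChamber C ∧ F ⊆ C

/-- The elements of the residue of a flag `F`: elements not in `F` incident to
every element of `F`. -/
def ResidueElt (F : Set X) : Type _ := {x : X // x ∉ F ∧ ∀ y ∈ F, Γ.inc x y}

/-- The residue of a flag `F`, an incidence system over `I ∖ t(F)`. -/
def residue (F : Set X) : IncidenceSystem (Γ.ResidueElt F) {i : I // i ∉ Γ.t '' F} where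
  t x := ⟨Γ.t x.1, by
    rintro ⟨y, hy, hty⟩
    exact x.2.1 (by
      rw [Γ.eq_of_inc_of_t_eq x.1 y (x.2.2 y hy) hty.symm]; exact hy)⟩
  inc x y := Γ.inc x.1 y.1
  inc_refl x := Γ.inc_refl x.1
  inc_symm x y h := Γ.inc_symm _ _ h
  eq_of_inc_of_t_eq x y h ht :=
    Subtype.ext (Γ.eq_of_inc_of_t_eq _ _ h (congrArg Subtype.val ht))

/-- `Γ` is connected when its incidence graph is connected. -/
def Connected : Prop := ∀ x y : X, Relation.ReflTransGen Γ.inc x y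

/-- `Γ` is residually connected when every residue of rank at least two
(including `Γ` itself, the residue of the empty flag) is connected. -/
def ResiduallyConnected : Prop :=
  ∀ F : Set X, Γ.IsFlag F → ({i : I | i ∉ Γ.t '' F}).Nontrivial → (Γ.residue F).Connected

/-- `Γ` is firm when every residue of rank one has at least two elements. -/
def IsFirm : Prop :=
  ∀ F : Set X, Γ.IsFlag F → (∃ i : I, {i' : I | i' ∉ Γ.t '' F} = {i}) →
    ∃ x y : Γ.ResidueElt F, x ≠ y

/-- `Γ` is thin when every residue of rank one has exactly two elements. -/
def IsThin : Prop :=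
  ∀ F : Set X, Γ.IsFlag F → (∃ i : I, {i' : I | i' ∉ Γ.t '' F} = {i}) →
    ∃ x y : Γ.ResidueElt F, x ≠ y ∧ ∀ z : Γ.ResidueElt F, z = x ∨ z = y

/-- A type-preserving automorphism: a permutation of the elements preserving
incidence and types. -/
def IsAut (e : Equiv.Perm X) : Prop :=
  (∀ x y, Γ.inc x y ↔ Γ.inc (e x) (e y)) ∧ ∀ x, Γ.t (e x) = Γ.t x

/-- Two sets of elements (e.g. chambers) in the same orbit of `Aut_I(Γ)`. -/
def SameOrbit (C C' : Set X) : Prop := ∃ e : Equiv.Perm X, Γ.IsAut e ∧ e '' C = C'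

/-- Two chambers are adjacent when they differ in exactly one element. -/
def Adjacent (C C' : Set X) : Prop :=
  Γ.IsChamber C ∧ Γ.IsChamber C' ∧
    ∃ x ∈ C, ∃ y ∈ C', x ≠ y ∧ C \ {x} = C' \ {y}

/-- `Γ` is chiral when `Aut_I(Γ)` has exactly two orbits on chambers,
and adjacent chambers always lie in distinct orbits. -/
def IsChiral : Prop :=
  (∃ C₁ C₂ : Set X, Γ.IsChamber C₁ ∧ Γ.IsChamber C₂ ∧ ¬ Γ.SameOrbit C₁ C₂ ∧
      ∀ C : Set X, Γ.IsChamber C → Γ.SameOrbit C₁ C ∨ Γ.SameOrbit C₂ C) ∧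
  ∀ C C' : Set X, Γ.Adjacent C C' → ¬ Γ.SameOrbit C C'

end IncidenceSystem

section Coset

variable {G : Type*} [Group G] {ι : Type*}

/-- The elements of the coset incidence system: pairs `(i, S)` where `S` is a
(left) coset `g Gᵢ`. -/
abbrev CosetElt (Gs : ι → Subgroup G) : Type _ :=
  {p : ι × Set G // ∃ g : G, p.2 = ({g} : Set G) * (Gs p.1 : Set G)}

lemma mem_singleton_mul_self {H : Subgroup G} (a : G) : a ∈ ({a} : Set G) * (H : Set G) :=
  ⟨a, rfl, 1, H.one_mem, mul_one a⟩

lemma singleton_mul_subgroup_eq {H : Subgroup G} {a b : G}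
    (h : ((({a} : Set G) * (H : Set G)) ∩ (({b} : Set G) * (H : Set G))).Nonempty) :
    ({a} : Set G) * (H : Set G) = ({b} : Set G) * (H : Set G) := by
  obtain ⟨x, hx1, hx2⟩ := h
  obtain ⟨a', ha', h1, hh1, hxa⟩ := Set.mem_mul.mp hx1
  obtain ⟨b', hb', h2, hh2, hxb⟩ := Set.mem_mul.mp hx2
  clear hx1 hx2
  obtain rfl : a = a' := ha'.symm
  obtain rfl : b = b' := hb'.symm
  have key : a * h1 = b * h2 := hxa.trans hxb.symm
  have e1 : b⁻¹ * (a * h1) = h2 := by rw [key, inv_mul_cancel_left]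
  have e : b⁻¹ * a = h2 * h1⁻¹ := by rw [← e1]; group
  have hba : b⁻¹ * a ∈ H := e ▸ H.mul_mem hh2 (H.inv_mem hh1)
  ext y
  simp only [Set.mem_mul, Set.mem_singleton_iff, exists_eq_left]
  constructor
  · rintro ⟨z, hz, rfl⟩
    exact ⟨(b⁻¹ * a) * z, H.mul_mem hba hz, by group⟩
  · rintro ⟨z, hz, rfl⟩
    exact ⟨(a⁻¹ * b) * z, H.mul_mem (by simpa using H.inv_mem hba) hz, by group⟩

/-- The coset incidence system `Γ(G; (Gᵢ)_{i∈ι})` : elements are the cosets `g Gᵢ`,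
the type of `g Gᵢ` is `i`, and two cosets are incident iff they meet. -/
def cosetSystem (Gs : ι → Subgroup G) : IncidenceSystem (CosetElt Gs) ι where
  t p := p.1.1
  inc p q := (p.1.2 ∩ q.1.2).Nonempty
  inc_refl p := by
    obtain ⟨g, hg⟩ := p.2
    exact ⟨g, by rw [Set.inter_self, hg]; exact mem_singleton_mul_self g⟩
  inc_symm p q h := by
    obtain ⟨x, hx1, hx2⟩ := h
    exact ⟨x, hx2, hx1⟩
  eq_of_inc_of_t_eq p q h ht := by
    obtain ⟨a, ha⟩ := p.2
    obtain ⟨b, hb⟩ := q.2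
    have ht' : p.1.1 = q.1.1 := ht
    apply Subtype.ext
    apply Prod.ext ht'
    show p.1.2 = q.1.2
    have hb2 : q.1.2 = ({b} : Set G) * (Gs p.1.1 : Set G) := by rw [hb, ht']
    rw [ha, hb2]
    apply singleton_mul_subgroup_eq
    rw [← ha, ← hb2]
    exact h

/-- The coset `g Gᵢ` as an element of the coset incidence system. -/
def mkElt (Gs : ι → Subgroup G) (i : ι) (g : G) : CosetElt Gs :=
  ⟨(i, ({g} : Set G) * (Gs i : Set G)), ⟨g, rfl⟩⟩

/-- The identity coset `Gᵢ` as an element of the coset incidence system. -/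
def idElt (Gs : ι → Subgroup G) (i : ι) : CosetElt Gs :=
  ⟨(i, (Gs i : Set G)), ⟨1, by rw [Set.singleton_one, one_mul]⟩⟩

/-- The action of `g ∈ G` on the coset incidence system by multiplication. -/
def actElt (Gs : ι → Subgroup G) (g : G) (x : CosetElt Gs) : CosetElt Gs :=
  ⟨(x.1.1, ({g} : Set G) * x.1.2), by
    obtain ⟨a, ha⟩ := x.2
    exact ⟨g * a, by rw [ha, ← mul_assoc, Set.singleton_mul_singleton]⟩⟩

/-- `G` is transitive on the set of flags of type `J` of the coset incidence system. -/
def flagTransitiveOn (Gs : ι → Subgroup G) (J : Set ι) : Prop :=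
  ∀ F F' : Set (CosetElt Gs), (cosetSystem Gs).IsFlag F → (cosetSystem Gs).IsFlag F' →
    (cosetSystem Gs).t '' F = J → (cosetSystem Gs).t '' F' = J →
    ∃ g : G, (actElt Gs g) '' F = F'

/-- The parabolic subgroup `G_J := ⋂_{j ∈ J} G_j`. -/
def interSub (Gs : ι → Subgroup G) (J : Set ι) : Subgroup G := ⨅ j ∈ J, Gs j

/-- The flag `{G_j : j ∈ J}` of identity cosets. -/
def baseFlag (Gs : ι → Subgroup G) (J : Set ι) : Set (CosetElt Gs) :=
  {x | ∃ j ∈ J, x = idElt Gs j}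

/-- The family of subgroups `(G_{J ∪ {i}})_{i ∈ I ∖ J}` of `G_J`. -/
def resFamily (Gs : ι → Subgroup G) (J : Set ι) :
    {i : ι // i ∉ J} → Subgroup (interSub Gs J) :=
  fun i => (interSub Gs (insert i.1 J)).subgroupOf (interSub Gs J)

lemma interSub_le {Gs : ι → Subgroup G} {J : Set ι} {j : ι} (hj : j ∈ J) :
    interSub Gs J ≤ Gs j := by
  intro x hx
  simp only [interSub, Subgroup.mem_iInf] at hx
  exact hx j hj

/-- The canonical homomorphism `φ_J` from the coset incidence system
`Γ(G_J, (G_{J∪{i}})_{i ∈ I∖J})` to the residue of the flag `{G_j : j ∈ J}`,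
given by `φ_J (a G_{J∪{i}}) = a G_i` for `a ∈ G_J`. -/
noncomputable def phi (Gs : ι → Subgroup G) (J : Set ι)
    (x : CosetElt (resFamily Gs J)) :
    (cosetSystem Gs).ResidueElt (baseFlag Gs J) :=
  ⟨mkElt Gs x.1.1.1 (x.2.choose : G), by
    constructor
    · rintro ⟨j, hj, hEq⟩
      have : x.1.1.1 = j := congrArg (fun y : CosetElt Gs => y.1.1) hEq
      exact x.1.1.2 (this ▸ hj)
    · rintro y ⟨j, hj, rfl⟩
      refine ⟨(x.2.choose : G), mem_singleton_mul_self _, ?_⟩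
      exact interSub_le hj (x.2.choose).2⟩

end Coset

section CPlus

variable {G : Type*} [Group G]

/-- The subgroup `G⁺_J := ⟨α_i⁻¹ α_j : i, j ∈ J⟩`. -/
def GJc (α : ℕ → G) (J : Set ℕ) : Subgroup G :=
  Subgroup.closure {g | ∃ i ∈ J, ∃ j ∈ J, g = (α i)⁻¹ * α j}

/-- `(G, {α_1, …, α_{r-1}})` is a C⁺-group: `α_0 = 1`, the `α_j` (`1 ≤ j ≤ r-1`)
generate `G`, and the intersection condition IC⁺ holds. -/
def IsCPlusGroup (r : ℕ) (α : ℕ → G) : Prop :=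
  α 0 = 1 ∧
  Subgroup.closure {g | ∃ j : ℕ, 1 ≤ j ∧ j < r ∧ g = α j} = ⊤ ∧
  ∀ J K : Set ℕ, J ⊆ Set.Iio r → K ⊆ Set.Iio r → J.Nontrivial → K.Nontrivial →
    GJc α J ⊓ GJc α K = GJc α (J ∩ K)

/-- The maximal parabolic subgroups: `G₀⁺ = ⟨α_1⁻¹ α_j : j ≥ 2⟩` and
`G_i⁺ = ⟨α_j : j ≠ i⟩` for `i ≥ 1`. -/
def maxParab (r : ℕ) (α : ℕ → G) (i : ℕ) : Subgroup G :=
  if i = 0 then Subgroup.closure {g | ∃ j : ℕ, 2 ≤ j ∧ j < r ∧ g = (α 1)⁻¹ * α j}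
  else Subgroup.closure {g | ∃ j : ℕ, 1 ≤ j ∧ j < r ∧ j ≠ i ∧ g = α j}

/-- The family `(G_i⁺)_{i ∈ {0,…,r-1}}` of maximal parabolic subgroups of a C⁺-group. -/
def cplusFamily (r : ℕ) (α : ℕ → G) : Fin r → Subgroup G := fun i => maxParab r α i.1

end CPlus

/-! For `a, b ∈ G_J` the cosets `a G_{J∪{i}}` and `b G_{J∪{i}}` agree iff `a⁻¹ b ∈ G_i ∩ G_J`,
i.e. iff `a Gᵢ = b Gᵢ`; this makes `φ_J` well defined and injective, and `a G_{J∪{i}} ∩ b G_{J∪{j}}`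
nonempty clearly gives `a Gᵢ ∩ b Gⱼ` nonempty. The residue of `{G_j : j ∈ J}` consists of the
cosets `g Gᵢ` with `i ∉ J` and `g ∈ ⋂_{j∈J} Gⱼ Gᵢ`, whereas the image of `φ_J` consists of those
with `g ∈ G_J Gᵢ`: this is the surjectivity criterion.

For the converse on incidence, let `a Gᵢ` meet `b Gⱼ` with `a, b ∈ G_J` and `i ≠ j`. Then
`b⁻¹ a ∈ G_J ∩ Gⱼ Gᵢ ⊆ ⋂_{k ∈ J∪{j}} G_k Gᵢ`, which equals `G_{J∪{j}} Gᵢ` when `φ_{J∪{j}}` is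
surjective. Writing `b⁻¹ a = v u` accordingly forces `u ∈ G_J`, hence `u ∈ G_{J∪{i}}`, so the
cosets already meet inside `G_J`. -/

section Cosets

variable {G : Type*} [Group G]

lemma singleton_mul_eq_smul (a : G) (s : Set G) : ({a} : Set G) * s = a • s :=
  Set.singleton_smul

lemma mem_singleton_mul_iff {H : Subgroup G} {a b : G} :
    b ∈ ({a} : Set G) * (H : Set G) ↔ a⁻¹ * b ∈ H := by
  rw [singleton_mul_eq_smul, mem_leftCoset_iff, SetLike.mem_coe]

lemma singleton_mul_eq_singleton_mul_iff {H : Subgroup G} {a b : G} :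
    ({a} : Set G) * (H : Set G) = ({b} : Set G) * (H : Set G) ↔ a⁻¹ * b ∈ H := by
  rw [singleton_mul_eq_smul, singleton_mul_eq_smul, leftCoset_eq_iff]

lemma singleton_mul_inter_singleton_mul_nonempty_iff {H K : Subgroup G} {a b : G} :
    ((({a} : Set G) * (H : Set G)) ∩ (({b} : Set G) * (K : Set G))).Nonempty ↔
      b⁻¹ * a ∈ (K : Set G) * (H : Set G) := by
  simp only [Set.Nonempty, Set.mem_inter_iff, mem_singleton_mul_iff]
  constructor
  · rintro ⟨c, hac, hbc⟩
    exact ⟨b⁻¹ * c, hbc, (a⁻¹ * c)⁻¹, inv_mem hac, by group⟩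
  · rintro ⟨k, hk, h, hh, hkh⟩
    refine ⟨a * h⁻¹, by simpa using inv_mem hh, ?_⟩
    rwa [← mul_assoc, ← hkh, mul_inv_cancel_right]

lemma mem_subgroupOf_mul_subgroupOf_iff {H L K : Subgroup G} (hH : H ≤ K) (hL : L ≤ K)
    (x : K) : x ∈ (H.subgroupOf K : Set K) * (L.subgroupOf K : Set K) ↔
      (x : G) ∈ (H : Set G) * (L : Set G) := by
  constructor
  · rintro ⟨h, hh, l, hl, rfl⟩
    exact ⟨h, hh, l, hl, rfl⟩
  · rintro ⟨h, hh, l, hl, hx⟩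
    exact ⟨⟨h, hH hh⟩, hh, ⟨l, hL hl⟩, hl, Subtype.ext hx⟩

end Cosets

section CosetSystem

variable {G : Type*} [Group G] {ι : Type*} {Gs : ι → Subgroup G}

lemma mkElt_choose (x : CosetElt Gs) : mkElt Gs x.1.1 x.2.choose = x :=
  Subtype.ext (Prod.ext rfl x.2.choose_spec.symm)

lemma exists_mkElt_eq (x : CosetElt Gs) : ∃ i g, mkElt Gs i g = x :=
  ⟨_, _, mkElt_choose x⟩

lemma mkElt_eq_mkElt_iff {i j : ι} {a b : G} :
    mkElt Gs i a = mkElt Gs j b ↔ i = j ∧ a⁻¹ * b ∈ Gs i := by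
  constructor
  · intro h
    obtain rfl : i = j := congrArg (fun x : CosetElt Gs => x.1.1) h
    exact ⟨rfl, singleton_mul_eq_singleton_mul_iff.mp (congrArg (fun x : CosetElt Gs => x.1.2) h)⟩
  · rintro ⟨rfl, h⟩
    exact Subtype.ext (Prod.ext rfl (singleton_mul_eq_singleton_mul_iff.mpr h))

lemma idElt_eq_mkElt_one (i : ι) : idElt Gs i = mkElt Gs i 1 :=
  Subtype.ext (Prod.ext rfl (show (Gs i : Set G) = {1} * Gs i by rw [Set.singleton_one, one_mul]))

lemma cosetSystem_inc_mkElt_iff {i j : ι} {a b : G} :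
    (cosetSystem Gs).inc (mkElt Gs i a) (mkElt Gs j b) ↔
      b⁻¹ * a ∈ (Gs j : Set G) * (Gs i : Set G) :=
  singleton_mul_inter_singleton_mul_nonempty_iff

lemma cosetSystem_inc_idElt_iff {i j : ι} {g : G} :
    (cosetSystem Gs).inc (mkElt Gs i g) (idElt Gs j) ↔ g ∈ (Gs j : Set G) * (Gs i : Set G) := by
  rw [idElt_eq_mkElt_one, cosetSystem_inc_mkElt_iff, inv_one, one_mul]

end CosetSystem

section Parabolic

variable {G : Type*} [Group G] {ι : Type*} {Gs : ι → Subgroup G}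

lemma interSub_insert (i : ι) (J : Set ι) :
    interSub Gs (insert i J) = Gs i ⊓ interSub Gs J := by
  simp only [interSub, iInf_insert]

lemma interSub_insert_le (i : ι) (J : Set ι) : interSub Gs (insert i J) ≤ interSub Gs J :=
  (interSub_insert i J).trans_le inf_le_right

lemma interSub_mul_subset_iInter_mul (J : Set ι) (i : ι) :
    (interSub Gs J : Set G) * (Gs i : Set G) ⊆ ⋂ j ∈ J, (Gs j : Set G) * (Gs i : Set G) :=
  Set.subset_iInter₂ fun _ hj => Set.mul_subset_mul_right (interSub_le hj)

lemma mem_interSub_insert_mul_of_mem_mul {J : Set ι} {i j : ι}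
    (hcond : ⋂ k ∈ insert j J, (Gs k : Set G) * (Gs i : Set G)
      ⊆ (interSub Gs (insert j J) : Set G) * (Gs i : Set G))
    {g : G} (hgJ : g ∈ interSub Gs J) (hg : g ∈ (Gs j : Set G) * (Gs i : Set G)) :
    g ∈ (interSub Gs (insert j J) : Set G) * (interSub Gs (insert i J) : Set G) := by
  have hg' : g ∈ ⋂ k ∈ insert j J, (Gs k : Set G) * (Gs i : Set G) := by
    simp only [Set.mem_iInter₂, Set.mem_insert_iff]
    rintro k (rfl | hk)
    · exact hg
    · exact ⟨g, interSub_le hk hgJ, 1, one_mem _, mul_one g⟩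
  obtain ⟨v, hv, u, hu, rfl⟩ := hcond hg'
  have hvJ : v ∈ interSub Gs J := interSub_insert_le j J hv
  have huJ : u ∈ interSub Gs J := by
    simpa using mul_mem (inv_mem hvJ) hgJ
  exact ⟨v, hv, u, by rw [SetLike.mem_coe, interSub_insert]; exact ⟨hu, huJ⟩, rfl⟩

lemma mem_resFamily_iff {J : Set ι} {i : {i : ι // i ∉ J}} {g : interSub Gs J} :
    g ∈ resFamily Gs J i ↔ (g : G) ∈ Gs i.1 := by
  rw [resFamily, Subgroup.mem_subgroupOf, interSub_insert, Subgroup.mem_inf]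
  exact and_iff_left g.2

lemma resFamily_inc_mkElt_iff {J : Set ι} {i j : {i : ι // i ∉ J}} {a b : interSub Gs J} :
    (cosetSystem (resFamily Gs J)).inc (mkElt _ i a) (mkElt _ j b) ↔
      (b : G)⁻¹ * a ∈
        (interSub Gs (insert j.1 J) : Set G) * (interSub Gs (insert i.1 J) : Set G) := by
  rw [cosetSystem_inc_mkElt_iff, resFamily, resFamily,
    mem_subgroupOf_mul_subgroupOf_iff (interSub_insert_le _ _) (interSub_insert_le _ _)]
  rfl

lemma mkElt_mem_residue_baseFlag_iff {J : Set ι} {i : ι} {g : G} :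
    (mkElt Gs i g ∉ baseFlag Gs J ∧ ∀ y ∈ baseFlag Gs J, (cosetSystem Gs).inc (mkElt Gs i g) y) ↔
      i ∉ J ∧ g ∈ ⋂ j ∈ J, (Gs j : Set G) * (Gs i : Set G) := by
  constructor
  · rintro ⟨hnot, hinc⟩
    refine ⟨fun hi => hnot ⟨i, hi, ?_⟩, Set.mem_iInter₂.mpr fun j hj =>
      cosetSystem_inc_idElt_iff.mp (hinc _ ⟨j, hj, rfl⟩)⟩
    exact (cosetSystem Gs).eq_of_inc_of_t_eq _ _ (hinc _ ⟨i, hi, rfl⟩) rfl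
  · rintro ⟨hi, hg⟩
    refine ⟨?_, ?_⟩
    · rintro ⟨j, hj, hEq⟩
      obtain rfl : i = j := congrArg (fun x : CosetElt Gs => x.1.1) hEq
      exact hi hj
    · rintro _ ⟨j, hj, rfl⟩
      exact cosetSystem_inc_idElt_iff.mpr (Set.mem_iInter₂.mp hg j hj)

end Parabolic

section Phi

variable {G : Type*} [Group G] {ι : Type*} {Gs : ι → Subgroup G}

lemma phi_mkElt (J : Set ι) (i : {i : ι // i ∉ J}) (a : interSub Gs J) :
    (phi Gs J (mkElt (resFamily Gs J) i a)).1 = mkElt Gs i.1 (a : G) := by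
  obtain ⟨-, h⟩ := mkElt_eq_mkElt_iff.mp (mkElt_choose (mkElt (resFamily Gs J) i a))
  exact mkElt_eq_mkElt_iff.mpr ⟨rfl, mem_resFamily_iff.mp h⟩

lemma phi_injective (J : Set ι) : Function.Injective (phi Gs J) := by
  intro x y hxy
  obtain ⟨i, a, rfl⟩ := exists_mkElt_eq x
  obtain ⟨j, b, rfl⟩ := exists_mkElt_eq y
  have h := congrArg Subtype.val hxy
  rw [phi_mkElt, phi_mkElt, mkElt_eq_mkElt_iff] at h
  obtain ⟨hij, hab⟩ := h
  obtain rfl : i = j := Subtype.ext hij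
  exact mkElt_eq_mkElt_iff.mpr ⟨rfl, mem_resFamily_iff.mpr (by simpa using hab)⟩

lemma inc_phi_of_inc (J : Set ι) {x y : CosetElt (resFamily Gs J)}
    (h : (cosetSystem (resFamily Gs J)).inc x y) :
    ((cosetSystem Gs).residue (baseFlag Gs J)).inc (phi Gs J x) (phi Gs J y) := by
  obtain ⟨i, a, rfl⟩ := exists_mkElt_eq x
  obtain ⟨j, b, rfl⟩ := exists_mkElt_eq y
  show (cosetSystem Gs).inc (phi Gs J _).1 (phi Gs J _).1
  rw [phi_mkElt, phi_mkElt, cosetSystem_inc_mkElt_iff]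
  exact Set.mul_subset_mul (interSub_le (Set.mem_insert _ _)) (interSub_le (Set.mem_insert _ _))
    (resFamily_inc_mkElt_iff.mp h)

lemma phi_surjective_iff_subset (J : Set ι) :
    Function.Surjective (phi Gs J) ↔
      ∀ i ∉ J, ⋂ j ∈ J, (Gs j : Set G) * (Gs i : Set G) ⊆
        (interSub Gs J : Set G) * (Gs i : Set G) := by
  constructor
  · intro hsurj i hi g hg
    obtain ⟨x, hx⟩ := hsurj ⟨mkElt Gs i g, mkElt_mem_residue_baseFlag_iff.mpr ⟨hi, hg⟩⟩
    obtain ⟨k, a, rfl⟩ := exists_mkElt_eq x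
    have h := congrArg Subtype.val hx
    rw [phi_mkElt, mkElt_eq_mkElt_iff] at h
    obtain ⟨rfl, ha⟩ := h
    exact ⟨a, a.2, _, ha, mul_inv_cancel_left _ _⟩
  · rintro hcond ⟨y, hy⟩
    obtain ⟨i, g, rfl⟩ := exists_mkElt_eq y
    obtain ⟨hi, hg⟩ := mkElt_mem_residue_baseFlag_iff.mp hy
    obtain ⟨a, ha, u, hu, rfl⟩ := hcond i hi hg
    refine ⟨mkElt (resFamily Gs J) ⟨i, hi⟩ ⟨a, ha⟩, Subtype.ext ?_⟩
    rw [phi_mkElt, mkElt_eq_mkElt_iff]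
    exact ⟨rfl, by simpa using hu⟩

lemma phi_surjective_iff (J : Set ι) :
    Function.Surjective (phi Gs J) ↔
      ∀ i ∉ J, ⋂ j ∈ J, (Gs j : Set G) * (Gs i : Set G) =
        (interSub Gs J : Set G) * (Gs i : Set G) := by
  rw [phi_surjective_iff_subset]
  exact forall₂_congr fun i _ =>
    ⟨fun h => h.antisymm (interSub_mul_subset_iInter_mul J i), fun h => h.subset⟩

lemma inc_of_inc_phi {J : Set ι} (hsurj : ∀ j ∉ J, Function.Surjective (phi Gs (insert j J)))
    {x y : CosetElt (resFamily Gs J)}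
    (h : ((cosetSystem Gs).residue (baseFlag Gs J)).inc (phi Gs J x) (phi Gs J y)) :
    (cosetSystem (resFamily Gs J)).inc x y := by
  obtain ⟨i, a, rfl⟩ := exists_mkElt_eq x
  obtain ⟨j, b, rfl⟩ := exists_mkElt_eq y
  by_cases hij : i = j
  · subst hij
    rw [phi_injective J (((cosetSystem Gs).residue _).eq_of_inc_of_t_eq _ _ h rfl)]
    exact (cosetSystem _).inc_refl _
  change (cosetSystem Gs).inc (phi Gs J _).1 (phi Gs J _).1 at h
  rw [phi_mkElt, phi_mkElt, cosetSystem_inc_mkElt_iff] at h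
  have hi : i.1 ∉ insert j.1 J := by
    rintro (hij' | hiJ)
    exacts [hij (Subtype.ext hij'), i.2 hiJ]
  exact resFamily_inc_mkElt_iff.mpr <| mem_interSub_insert_mul_of_mem_mul
    ((phi_surjective_iff_subset _).mp (hsurj j j.2) i hi) (mul_mem (inv_mem b.2) a.2) h

end Phi

/-- (Lemma 1.8.9 of Buekenhout–Cohen) The natural map
`φ_J (a G_{J∪{i}}) = a Gᵢ` is an injective homomorphism of incidence systems over
`I ∖ J`; it is surjective iff `⋂_{j∈J} Gⱼ Gᵢ = G_J Gᵢ` for all `i ∈ I ∖ J`; and if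
`φ_J` is surjective for all `J`, then `φ_J` is an isomorphism for all `J`. -/
theorem phi_injective_homomorphism_and_surjectivity
    {G ι : Type*} [Group G] (Gs : ι → Subgroup G) :
    (∀ (J : Set ι) (i : {i : ι // i ∉ J}) (a : interSub Gs J),
        (phi Gs J (mkElt (resFamily Gs J) i a)).1 = mkElt Gs i.1 (a : G)) ∧
    (∀ J : Set ι, Function.Injective (phi Gs J)) ∧
    (∀ (J : Set ι) (x : CosetElt (resFamily Gs J)),
        (cosetSystem Gs).t (phi Gs J x).1 = (x.1.1 : ι)) ∧
    (∀ (J : Set ι) (x y : CosetElt (resFamily Gs J)),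
        (cosetSystem (resFamily Gs J)).inc x y →
          ((cosetSystem Gs).residue (baseFlag Gs J)).inc (phi Gs J x) (phi Gs J y)) ∧
    (∀ J : Set ι, Function.Surjective (phi Gs J) ↔
        ∀ i ∉ J, (⋂ j ∈ J, (Gs j : Set G) * (Gs i : Set G))
          = (interSub Gs J : Set G) * (Gs i : Set G)) ∧
    ((∀ J : Set ι, Function.Surjective (phi Gs J)) →
      ∀ J : Set ι, Function.Bijective (phi Gs J) ∧
        ∀ x y : CosetElt (resFamily Gs J),
          (cosetSystem (resFamily Gs J)).inc x y ↔
            ((cosetSystem Gs).residue (baseFlag Gs J)).inc (phi Gs J x) (phi Gs J y)) :=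
  ⟨phi_mkElt, phi_injective, fun _ _ => rfl, fun J _ _ => inc_phi_of_inc J, phi_surjective_iff,
    fun hall J => ⟨⟨phi_injective J, hall J⟩,
      fun _ _ => ⟨inc_phi_of_inc J, inc_of_inc_phi fun _ _ => hall _⟩⟩⟩

end ChiralGeom
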